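/- Let y be an integer with 0 ≤ y ≤ n, let 0 ≤ v₁ < v₂ ≤ 1, and let c ∈ (0,1). If θ₁, θ₂ ∈ (0,1) satisfy (1−v₁) F_{θ₁}(y−1) + v₁ F_{θ₁}(y) = c and (1−v₂) F_{θ₂}(y−1) + v₂ F_{θ₂}(y) = c, then θ₁ < θ₂. (The upper endpoint u_R(y,v) of the randomized confidence interval is strictly increasing in v.) -/

import Mathlib

/-- The Binomial(n, θ) probability mass function `f_θ(y) = C(n,y) θ^y (1-θ)^(n-y)`. -/
noncomputable def binomP (n : ℕ) (θ : ℝ) (y : ℕ) : ℝ :=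
  (n.choose y : ℝ) * θ ^ y * (1 - θ) ^ (n - y)

/-- `F_θ(y-1) = ∑_{j=0}^{y-1} f_θ(j)`, with the convention `F_θ(-1) = 0`. -/
noncomputable def binomCDFpred (n : ℕ) (θ : ℝ) (y : ℕ) : ℝ :=
  ∑ j ∈ Finset.range y, binomP n θ j

/-- The Binomial(n, θ) cumulative distribution function `F_θ(y) = ∑_{j=0}^{y} f_θ(j)`. -/
noncomputable def binomCDF (n : ℕ) (θ : ℝ) (y : ℕ) : ℝ :=
  ∑ j ∈ Finset.range (y + 1), binomP n θ j

/-!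
Write `f⁽ⁿ⁾_θ` and `F⁽ⁿ⁾_θ` for the pmf and CDF with `n` trials. Differentiating in `θ`,
`d/dθ f⁽ⁿ⁺¹⁾_θ(j) = (n+1) (f⁽ⁿ⁾_θ(j-1) - f⁽ⁿ⁾_θ(j))`, so the CDF telescopes to
`d/dθ F⁽ⁿ⁺¹⁾_θ(m) = -(n+1) f⁽ⁿ⁾_θ(m) ≤ 0` and is antitone in `θ` on `[0,1]`.
Each equation reads `F_θ(y-1) + v f_θ(y) = c` with `f_θ(y) > 0` on `(0,1)`. If `θ₂ ≤ θ₁`, the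
value at `(θ₂, v₂)` is at least the value at `(θ₁, v₂)`, which strictly exceeds the value at
`(θ₁, v₁)`; so both cannot equal `c`.
-/

open Finset Set

lemma binomP_nonneg (n : ℕ) {θ : ℝ} (hθ : θ ∈ Icc (0 : ℝ) 1) (j : ℕ) : 0 ≤ binomP n θ j := by
  have : 0 ≤ 1 - θ := sub_nonneg.2 hθ.2
  have := hθ.1
  unfold binomP; positivity

lemma binomP_pos {n y : ℕ} (hy : y ≤ n) {θ : ℝ} (hθ : θ ∈ Ioo (0 : ℝ) 1) :
    0 < binomP n θ y := by
  have : (0 : ℝ) < n.choose y := by exact_mod_cast Nat.choose_pos hy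
  have : 0 < 1 - θ := sub_pos.2 hθ.2
  have := hθ.1
  unfold binomP; positivity

lemma binomP_zero_left (θ : ℝ) (j : ℕ) : binomP 0 θ j = if j = 0 then 1 else 0 := by
  cases j <;> simp [binomP]

lemma binomCDF_eq_binomCDFpred_add (n : ℕ) (θ : ℝ) (y : ℕ) :
    binomCDF n θ y = binomCDFpred n θ y + binomP n θ y :=
  sum_range_succ _ _

lemma hasDerivAt_one_sub_pow (n : ℕ) (θ : ℝ) :
    HasDerivAt (fun t => (1 - t) ^ n) (-(n * (1 - θ) ^ (n - 1))) θ :=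
  (((hasDerivAt_id θ).const_sub 1).fun_pow n).congr_deriv (by simp)

lemma hasDerivAt_binomP_succ_zero (n : ℕ) (θ : ℝ) :
    HasDerivAt (fun t => binomP (n + 1) t 0) (-((n + 1) * binomP n θ 0)) θ := by
  simpa [binomP] using hasDerivAt_one_sub_pow (n + 1) θ

lemma hasDerivAt_binomP_succ_succ (n j : ℕ) (θ : ℝ) :
    HasDerivAt (fun t => binomP (n + 1) t (j + 1))
      ((n + 1) * (binomP n θ j - binomP n θ (j + 1))) θ := by
  have hfun : (fun t => binomP (n + 1) t (j + 1))
      = fun t => ((n + 1).choose (j + 1) : ℝ) * (t ^ (j + 1) * (1 - t) ^ (n - j)) := by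
    funext t; simp only [binomP, Nat.add_sub_add_right, mul_assoc]
  have hlow : ((n + 1 : ℕ) : ℝ) * n.choose j = (n + 1).choose (j + 1) * (j + 1 : ℕ) := by
    exact_mod_cast Nat.add_one_mul_choose_eq n j
  have hhigh : (n.choose (j + 1) : ℝ) * (n + 1 : ℕ) = (n + 1).choose (j + 1) * (n - j : ℕ) := by
    exact_mod_cast Nat.add_sub_add_right n 1 j ▸ Nat.choose_mul_succ_eq n (j + 1)
  rw [hfun]
  refine (((hasDerivAt_pow (j + 1) θ).fun_mul (hasDerivAt_one_sub_pow (n - j) θ)).const_mul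
    _).congr_deriv ?_
  simp only [binomP, ← Nat.sub_sub, Nat.add_sub_cancel]
  push_cast at hlow hhigh ⊢
  linear_combination θ ^ (j + 1) * (1 - θ) ^ (n - j - 1) * hhigh - θ ^ j * (1 - θ) ^ (n - j) * hlow

lemma hasDerivAt_sum_range_binomP_succ (n m : ℕ) (θ : ℝ) :
    HasDerivAt (fun t => ∑ j ∈ range (m + 1), binomP (n + 1) t j)
      (-((n + 1) * binomP n θ m)) θ := by
  induction m with
  | zero => simpa using hasDerivAt_binomP_succ_zero n θ
  | succ m ih =>
    simp only [sum_range_succ _ (m + 1)]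
    exact (ih.add (hasDerivAt_binomP_succ_succ n m θ)).congr_deriv (by ring)

lemma antitoneOn_sum_range_binomP (n k : ℕ) :
    AntitoneOn (fun θ => ∑ j ∈ range k, binomP n θ j) (Icc 0 1) := by
  rcases n with _ | n
  · simp only [binomP_zero_left]
    exact antitoneOn_const
  rcases k with _ | m
  · exact antitoneOn_const
  have hderiv := hasDerivAt_sum_range_binomP_succ n m
  refine antitoneOn_of_hasDerivWithinAt_nonpos (convex_Icc 0 1)
    (fun θ _ => (hderiv θ).continuousAt.continuousWithinAt)
    (fun θ _ => (hderiv θ).hasDerivWithinAt) fun θ hθ => ?_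
  rw [interior_Icc] at hθ
  exact neg_nonpos.2 (mul_nonneg (by positivity) (binomP_nonneg n (Ioo_subset_Icc_self hθ) m))

theorem stmt_10_general (n : ℕ) (y : ℕ) (hy : y ≤ n)
    (v₁ v₂ : ℝ) (hv₁ : 0 ≤ v₁) (hv₁₂ : v₁ < v₂) (hv₂ : v₂ ≤ 1)
    (c : ℝ)
    (θ₁ θ₂ : ℝ) (hθ₁ : θ₁ ∈ Set.Ioo (0 : ℝ) 1) (hθ₂ : θ₂ ∈ Set.Ioo (0 : ℝ) 1)
    (h1 : (1 - v₁) * binomCDFpred n θ₁ y + v₁ * binomCDF n θ₁ y = c)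
    (h2 : (1 - v₂) * binomCDFpred n θ₂ y + v₂ * binomCDF n θ₂ y = c) :
    θ₁ < θ₂ := by
  by_contra! hθ
  have hpred : binomCDFpred n θ₁ y ≤ binomCDFpred n θ₂ y :=
    antitoneOn_sum_range_binomP n y (Ioo_subset_Icc_self hθ₂) (Ioo_subset_Icc_self hθ₁) hθ
  have hcdf : binomCDF n θ₁ y ≤ binomCDF n θ₂ y :=
    antitoneOn_sum_range_binomP n (y + 1) (Ioo_subset_Icc_self hθ₂) (Ioo_subset_Icc_self hθ₁) hθ
  have hmass := binomP_pos hy hθ₁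
  have hv₂' : 0 ≤ 1 - v₂ := sub_nonneg.2 hv₂
  refine (lt_irrefl c ?_).elim
  calc c = binomCDFpred n θ₁ y + v₁ * binomP n θ₁ y := by
          rw [← h1, binomCDF_eq_binomCDFpred_add]; ring
    _ < binomCDFpred n θ₁ y + v₂ * binomP n θ₁ y := by gcongr
    _ = (1 - v₂) * binomCDFpred n θ₁ y + v₂ * binomCDF n θ₁ y := by
          rw [binomCDF_eq_binomCDFpred_add]; ring
    _ ≤ (1 - v₂) * binomCDFpred n θ₂ y + v₂ * binomCDF n θ₂ y := by
          gcongr; linarith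
    _ = c := h2

/-- For `0 ≤ y ≤ n`, `0 ≤ v₁ < v₂ ≤ 1`, `c ∈ (0,1)`: if `θ₁, θ₂ ∈ (0,1)` satisfy
`(1-v₁) F_{θ₁}(y-1) + v₁ F_{θ₁}(y) = c` and `(1-v₂) F_{θ₂}(y-1) + v₂ F_{θ₂}(y) = c`, then
`θ₁ < θ₂` (the randomized upper endpoint `u_R(y,v)` is strictly increasing in `v`). -/
theorem stmt_10 (n : ℕ) (hn : 1 ≤ n) (y : ℕ) (hy : y ≤ n)
    (v₁ v₂ : ℝ) (hv₁ : 0 ≤ v₁) (hv₁₂ : v₁ < v₂) (hv₂ : v₂ ≤ 1)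
    (c : ℝ) (hc : c ∈ Set.Ioo (0 : ℝ) 1)
    (θ₁ θ₂ : ℝ) (hθ₁ : θ₁ ∈ Set.Ioo (0 : ℝ) 1) (hθ₂ : θ₂ ∈ Set.Ioo (0 : ℝ) 1)
    (h1 : (1 - v₁) * binomCDFpred n θ₁ y + v₁ * binomCDF n θ₁ y = c)
    (h2 : (1 - v₂) * binomCDFpred n θ₂ y + v₂ * binomCDF n θ₂ y = c) :
    θ₁ < θ₂ :=
  stmt_10_general n y hy v₁ v₂ hv₁ hv₁₂ hv₂ c θ₁ θ₂ hθ₁ hθ₂ h1 h2
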